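/- arXiv:1506.01888 — 6 statements merged into one kernel-verified Lean document; each statement's English description precedes it below -/
import Mathlib

section
/- For every m ∈ (1/2, 1) and every integer n ≥ 0 such that 1 - α(n+1)² > 0 with α = 1-3m+2m², the point F_n(m) = (m/(2(1-α(n+1)²)), -(n+1)/√(1-α(n+1)²)) satisfies T(F_n(m)) = F_n(m), where T is computed with the branch index n. -/
open Real Set

theorem falling_balls_Fn_fixed (m : ℝ) (hm : m ∈ Set.Ioo (1/2 : ℝ) 1) (n : ℕ)
    (hpos : 0 < 1 - (1 - 3*m + 2*m^2) * ((n : ℝ) + 1)^2) :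
    let α : ℝ := 1 - 3*m + 2*m^2
    let h : ℝ := m / (2*(1 - α*((n : ℝ)+1)^2))
    let z : ℝ := -((n : ℝ)+1) / Real.sqrt (1 - α*((n : ℝ)+1)^2)
    let F : ℝ := 1 - h/m + α*z^2
    (m*F, -(2*(n : ℝ)+2)*Real.sqrt (2*F) - z) = (h, z) := by
  intro α h z F
  have hm0 : m ≠ 0 := by have := hm.1; linarith
  set D : ℝ := 1 - α*((n : ℝ)+1)^2 with hD
  have hD0 : 0 < D := hpos
  have hsD : 0 < Real.sqrt D := Real.sqrt_pos.mpr hD0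
  have hz2 : z^2 = ((n : ℝ)+1)^2 / D := by
    show ((-(↑n + 1)) / Real.sqrt D)^2 = _
    rw [div_pow, neg_sq, Real.sq_sqrt hD0.le]
  have hF : F = 1/(2*D) := by
    simp only [F, h, hz2, ← hD]
    field_simp
    ring
  have hsq : Real.sqrt (2*F) = 1 / Real.sqrt D := by
    rw [hF]
    rw [show 2 * (1/(2*D)) = 1/D by field_simp]
    rw [one_div, Real.sqrt_inv, one_div]
  rw [Prod.mk.injEq]
  constructor
  · rw [hF]; simp only [h, ← hD]; field_simp
  · rw [hsq]
    simp only [z, ← hD]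
    field_simp
    ring
end

section
/- For m ∈ (1/2, 1), the continuous-time period of the fixed point F_1(m) equals τ(F_1(m)) = 2m/√(-3/4 + 3m - 2m²), where τ is computed with branch index n = 1 and F_1(m) = (m/(2(1-4α)), -2/√(1-4α)) with α = 1-3m+2m². -/
open Real Set

theorem falling_balls_period_F1 (m : ℝ) (hm : m ∈ Set.Ioo (1/2 : ℝ) 1) :
    let α : ℝ := 1 - 3*m + 2*m^2
    let h : ℝ := m / (2*(1 - 4*α))
    let z : ℝ := -2 / Real.sqrt (1 - 4*α)
    let F : ℝ := 1 - h/m + α*z^2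
    (2*1+1)*Real.sqrt (2*F) + Real.sqrt (2*h/m) - 2*(m-1)*z
      = 2*m / Real.sqrt (-3/4 + 3*m - 2*m^2) := by
  obtain ⟨h1, h2⟩ := hm
  intro α h z F
  have hm0 : (0:ℝ) < m := by linarith
  have hs : (0:ℝ) < -3/4 + 3*m - 2*m^2 := by nlinarith
  set s : ℝ := -3/4 + 3*m - 2*m^2 with hsdef
  have hD : 1 - 4*α = 4*s := by simp only [α, hsdef]; ring
  set t := Real.sqrt s with htdef
  have ht : 0 < t := Real.sqrt_pos.mpr hs
  have ht2 : t^2 = s := Real.sq_sqrt hs.le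
  have hsqD : Real.sqrt (1 - 4*α) = 2*t := by
    rw [hD, show (4:ℝ)*s = (2*t)^2 by nlinarith [ht2]]
    exact Real.sqrt_sq (by positivity)
  have hz : z = -1/t := by
    simp only [z, hsqD]; field_simp
  have hhm : h / m = 1/(8*s) := by
    simp only [h, hD]
    field_simp
    ring
  have h2F : 2*F = 1/(4*s) := by
    simp only [F, hhm, hz]
    have hα : α = 1 - 3*m + 2*m^2 := rfl
    field_simp
    rw [ht2, hsdef]
    simp only [α]
    ring
  have hsqF : Real.sqrt (2*F) = 1/(2*t) := by
    rw [h2F, show (1:ℝ)/(4*s) = (1/(2*t))^2 by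
      rw [div_pow]; congr 1 <;> nlinarith [ht2]]
    exact Real.sqrt_sq (by positivity)
  have hsqh : Real.sqrt (2*h/m) = 1/(2*t) := by
    rw [show 2*h/m = 2*(h/m) by ring, hhm,
      show (2:ℝ)*(1/(8*s)) = (1/(2*t))^2 by
        rw [div_pow]; field_simp; nlinarith [ht2]]
    exact Real.sqrt_sq (by positivity)
  rw [hsqF, hsqh, hz]
  field_simp
  ring
end

section
/- Let M = [[-1, a],[b, -1-ab]] with a, b < 0, and suppose there is Λ > 1 with |Mv| ≥ √Λ for every unit vector v = (cos α, sin α) with α ∈ (0, π/2). Then the map sending the angle α of a vector in the open first quadrant to the angle of its image under M has derivative 1/((a sin α - cos α)² + (b cos α - (1+ab) sin α)²) ≤ 1/Λ in absolute value. -/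
open Real Set

theorem angle_map_derivative (a b Λ : ℝ) (ha : a < 0) (hb : b < 0) (hΛ : 1 < Λ)
    (hexp : ∀ α ∈ Set.Ioo (0 : ℝ) (π/2),
      Real.sqrt Λ ≤ Real.sqrt ((a*Real.sin α - Real.cos α)^2
        + (b*Real.cos α - (1 + a*b)*Real.sin α)^2)) :
    ∀ α ∈ Set.Ioo (0 : ℝ) (π/2),
      HasDerivAt
        (fun t => Real.arctan
          ((b*Real.cos t - (1 + a*b)*Real.sin t) / (a*Real.sin t - Real.cos t)))
        (1 / ((a*Real.sin α - Real.cos α)^2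
          + (b*Real.cos α - (1 + a*b)*Real.sin α)^2)) α ∧
      |1 / ((a*Real.sin α - Real.cos α)^2
          + (b*Real.cos α - (1 + a*b)*Real.sin α)^2)| ≤ 1/Λ := by
  intro α hα
  obtain ⟨hα0, hα2⟩ := hα
  have hs : 0 < Real.sin α :=
    Real.sin_pos_of_pos_of_lt_pi hα0 (by linarith [Real.pi_gt_three])
  have hc : 0 < Real.cos α :=
    Real.cos_pos_of_mem_Ioo ⟨by linarith [Real.pi_pos], hα2⟩
  have hg : a * Real.sin α - Real.cos α < 0 := by nlinarith
  have hg' : a * Real.sin α - Real.cos α ≠ 0 := ne_of_lt hg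
  set S := (a*Real.sin α - Real.cos α)^2
      + (b*Real.cos α - (1 + a*b)*Real.sin α)^2 with hS
  have hΛ0 : (0:ℝ) ≤ Λ := by linarith
  have hSnn : (0:ℝ) ≤ S := by positivity
  have hSΛ : Λ ≤ S := by
    have h := hexp α ⟨hα0, hα2⟩
    nlinarith [Real.sq_sqrt hΛ0, Real.sq_sqrt hSnn, Real.sqrt_nonneg Λ,
      Real.sqrt_nonneg S]
  have hSpos : 0 < S := by linarith
  constructor
  · have hf : HasDerivAt (fun t => b*Real.cos t - (1 + a*b)*Real.sin t)
        (b*(-Real.sin α) - (1 + a*b)*Real.cos α) α :=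
      ((Real.hasDerivAt_cos α).const_mul b).sub
        ((Real.hasDerivAt_sin α).const_mul (1 + a*b))
    have hgd : HasDerivAt (fun t => a*Real.sin t - Real.cos t)
        (a*Real.cos α - (-Real.sin α)) α :=
      ((Real.hasDerivAt_sin α).const_mul a).sub (Real.hasDerivAt_cos α)
    have hq := (hf.div hgd hg').arctan
    convert hq using 1
    · rfl
    have h1 := Real.sin_sq_add_cos_sq α
    rw [Pi.div_apply]
    rw [hS]
    field_simp
    ring_nf
    nlinarith [h1, sq_nonneg (a*Real.sin α - Real.cos α)]
  · rw [abs_of_pos (by positivity)]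
    apply one_div_le_one_div_of_le (by linarith) hSΛ
end

section
/- If unit vectors satisfy |v₁ - v₂|² = 2(1 - cos θ) where θ = ∠(v₁, v₂) ∈ (0, π/2], and a linear map contracts the angle to θ' ≤ θ/Λ for some Λ > 1, then the normalized images u₁, u₂ satisfy |u₁ - u₂|² ≤ γ²|v₁ - v₂|², where γ² = sup_{α ∈ (0, π/2]} (1 - cos(α/Λ))/(1 - cos α) < 1. -/
open Real Set
open scoped RealInnerProductSpace

lemma cos_contract_bound (Λ : ℝ) (hΛ : 1 < Λ) {α : ℝ} (hα : α ∈ Set.Ioc (0 : ℝ) (π/2)) :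
    1 - Real.cos (α / Λ) ≤ Λ⁻¹ * (1 - Real.cos α) := by
  have hΛ0 : (0:ℝ) < Λ := lt_trans one_pos hΛ
  have hπ : (0:ℝ) < π/2 := by positivity
  have h0 : (0:ℝ) ∈ Set.Icc (-(π/2)) (π/2) := by constructor <;> linarith
  have hαm : α ∈ Set.Icc (-(π/2)) (π/2) := by
    constructor <;> [linarith [hα.1]; exact hα.2]
  have ha : (0:ℝ) ≤ 1 - Λ⁻¹ := by
    have : Λ⁻¹ ≤ 1 := by
      rw [inv_le_one_iff₀]; right; linarith
    linarith
  have hb : (0:ℝ) ≤ Λ⁻¹ := by positivity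
  have hab : (1 - Λ⁻¹) + Λ⁻¹ = 1 := by ring
  have hc := strictConcaveOn_cos_Icc.concaveOn.2 h0 hαm ha hb hab
  simp only [smul_eq_mul, mul_zero, zero_add, Real.cos_zero, mul_one] at hc
  have heq : α / Λ = Λ⁻¹ * α := by field_simp
  rw [heq]
  linarith

theorem angle_contraction_vector_contraction
    {E : Type*} [NormedAddCommGroup E] [InnerProductSpace ℝ E]
    (Λ : ℝ) (hΛ : 1 < Λ) (A : E →ₗ[ℝ] E) (v₁ v₂ : E)
    (hv₁ : ‖v₁‖ = 1) (hv₂ : ‖v₂‖ = 1)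
    (hθ : InnerProductGeometry.angle v₁ v₂ ∈ Set.Ioc (0 : ℝ) (π/2))
    (hA₁ : A v₁ ≠ 0) (hA₂ : A v₂ ≠ 0)
    (hcontract : InnerProductGeometry.angle (A v₁) (A v₂)
      ≤ InnerProductGeometry.angle v₁ v₂ / Λ) :
    ‖‖A v₁‖⁻¹ • A v₁ - ‖A v₂‖⁻¹ • A v₂‖^2
      ≤ sSup ((fun α => (1 - Real.cos (α/Λ)) / (1 - Real.cos α)) '' Set.Ioc (0 : ℝ) (π/2))
          * ‖v₁ - v₂‖^2 ∧
    sSup ((fun α => (1 - Real.cos (α/Λ)) / (1 - Real.cos α)) '' Set.Ioc (0 : ℝ) (π/2)) < 1 := by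
  have hΛ0 : (0:ℝ) < Λ := lt_trans one_pos hΛ
  set f : ℝ → ℝ := fun α => (1 - Real.cos (α/Λ)) / (1 - Real.cos α) with hf
  set S : Set ℝ := f '' Set.Ioc (0 : ℝ) (π/2) with hSdef
  -- 1 - cos α > 0 for α in the interval
  have hden : ∀ α ∈ Set.Ioc (0 : ℝ) (π/2), 0 < 1 - Real.cos α := by
    intro α hα
    have : Real.cos α < 1 := by
      have h2 : Real.cos α < Real.cos 0 := by
        apply Real.cos_lt_cos_of_nonneg_of_le_pi le_rfl _ hα.1
        linarith [hα.2, Real.pi_pos]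
      simpa using h2
    linarith
  -- pointwise bound f α ≤ Λ⁻¹
  have hfb : ∀ α ∈ Set.Ioc (0 : ℝ) (π/2), f α ≤ Λ⁻¹ := by
    intro α hα
    rw [hf, div_le_iff₀ (hden α hα)]
    exact cos_contract_bound Λ hΛ hα
  have hbdd : BddAbove S := by
    refine ⟨Λ⁻¹, ?_⟩
    rintro x ⟨α, hα, rfl⟩
    exact hfb α hα
  have hne : S.Nonempty := ⟨f (π/2), ⟨π/2, ⟨by positivity, le_rfl⟩, rfl⟩⟩
  have hsup_le : sSup S ≤ Λ⁻¹ := csSup_le hne (by rintro x ⟨α, hα, rfl⟩; exact hfb α hα)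
  have hlt1 : sSup S < 1 := lt_of_le_of_lt hsup_le (by rw [inv_lt_one_iff₀]; right; exact hΛ)
  refine ⟨?_, hlt1⟩
  -- norms and angles
  set θ := InnerProductGeometry.angle v₁ v₂ with hθdef
  set θ' := InnerProductGeometry.angle (A v₁) (A v₂) with hθ'def
  set u₁ := ‖A v₁‖⁻¹ • A v₁ with hu₁
  set u₂ := ‖A v₂‖⁻¹ • A v₂ with hu₂
  have hnu₁ : ‖u₁‖ = 1 := norm_smul_inv_norm hA₁
  have hnu₂ : ‖u₂‖ = 1 := norm_smul_inv_norm hA₂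
  have hangle_u : InnerProductGeometry.angle u₁ u₂ = θ' := by
    rw [hu₁, hu₂, InnerProductGeometry.angle_smul_left_of_pos, InnerProductGeometry.angle_smul_right_of_pos]
    · exact inv_pos.mpr (norm_pos_iff.mpr hA₂)
    · exact inv_pos.mpr (norm_pos_iff.mpr hA₁)
  have hinner_u : (inner ℝ u₁ u₂ : ℝ) = Real.cos θ' := by
    have := InnerProductGeometry.cos_angle u₁ u₂
    rw [hangle_u, hnu₁, hnu₂] at this
    simp at this
    rw [this]
  have hinner_v : (inner ℝ v₁ v₂ : ℝ) = Real.cos θ := by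
    have := InnerProductGeometry.cos_angle v₁ v₂
    rw [← hθdef, hv₁, hv₂] at this
    simp at this
    rw [this]
  have hnsq_u : ‖u₁ - u₂‖^2 = 2 - 2 * Real.cos θ' := by
    rw [norm_sub_sq_real, hnu₁, hnu₂, hinner_u]; ring
  have hnsq_v : ‖v₁ - v₂‖^2 = 2 - 2 * Real.cos θ := by
    rw [norm_sub_sq_real, hv₁, hv₂, hinner_v]; ring
  -- cos θ' ≥ cos (θ/Λ)
  have hθ'0 : 0 ≤ θ' := InnerProductGeometry.angle_nonneg _ _
  have hθΛπ : θ / Λ ≤ π := by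
    have : θ / Λ ≤ θ := by
      rw [div_le_iff₀ hΛ0]
      nlinarith [hθ.1]
    linarith [hθ.2, Real.pi_pos]
  have hcos_mono : Real.cos (θ/Λ) ≤ Real.cos θ' :=
    Real.cos_le_cos_of_nonneg_of_le_pi hθ'0 hθΛπ hcontract
  -- chain
  have hstep : ‖u₁ - u₂‖^2 ≤ f θ * ‖v₁ - v₂‖^2 := by
    rw [hnsq_u, hnsq_v, hf]
    have hd := hden θ hθ
    rw [div_mul_eq_mul_div, le_div_iff₀ hd]
    nlinarith [hcos_mono]
  have hfθ : f θ ≤ sSup S := le_csSup hbdd ⟨θ, hθ, rfl⟩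
  calc ‖u₁ - u₂‖^2 ≤ f θ * ‖v₁ - v₂‖^2 := hstep
    _ ≤ sSup S * ‖v₁ - v₂‖^2 := by
        apply mul_le_mul_of_nonneg_right hfθ (by positivity)
end

section
/- For every integer k ≥ 2 and m ∈ (1/2, 1): -k/√(1 - (m-1)k(k-2)) ≤ -(k+1)/√((k+2)² - m(k+1)(k+3)) if and only if m ≤ (2k² + 2k - 1)/(2k² + 2k). -/
open Real Set

theorem Bxz_le_Ixz_iff (k : ℕ) (hk : 2 ≤ k) (m : ℝ) (hm : m ∈ Set.Ioo (1/2 : ℝ) 1) :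
    -(k : ℝ) / Real.sqrt (1 - (m-1)*(k : ℝ)*((k : ℝ)-2))
      ≤ -((k : ℝ)+1) / Real.sqrt (((k : ℝ)+2)^2 - m*((k : ℝ)+1)*((k : ℝ)+3))
    ↔ m ≤ (2*(k : ℝ)^2 + 2*(k : ℝ) - 1) / (2*(k : ℝ)^2 + 2*(k : ℝ)) := by
  obtain ⟨hm1, hm2⟩ := hm
  have hk2 : (2:ℝ) ≤ (k:ℝ) := by exact_mod_cast hk
  set x := (k:ℝ) with hx
  have hA : 0 < 1 - (m-1)*x*(x-2) := by
    nlinarith [mul_nonneg (mul_nonneg (by linarith : (0:ℝ) ≤ 1-m) (by linarith : (0:ℝ) ≤ x)) (by linarith : (0:ℝ) ≤ x-2)]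
  have hB : 0 < (x+2)^2 - m*(x+1)*(x+3) := by nlinarith
  have hsA : 0 < Real.sqrt (1 - (m-1)*x*(x-2)) := Real.sqrt_pos.mpr hA
  have hsB : 0 < Real.sqrt ((x+2)^2 - m*(x+1)*(x+3)) := Real.sqrt_pos.mpr hB
  rw [div_le_div_iff₀ hsA hsB, neg_mul, neg_mul, neg_le_neg_iff]
  have e1 : (x+1) * Real.sqrt (1 - (m-1)*x*(x-2))
      = Real.sqrt ((x+1)^2 * (1 - (m-1)*x*(x-2))) := by
    rw [Real.sqrt_mul (sq_nonneg _), Real.sqrt_sq (by positivity)]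
  have e2 : x * Real.sqrt ((x+2)^2 - m*(x+1)*(x+3))
      = Real.sqrt (x^2 * ((x+2)^2 - m*(x+1)*(x+3))) := by
    rw [Real.sqrt_mul (sq_nonneg _), Real.sqrt_sq (by positivity)]
  rw [e1, e2, Real.sqrt_le_sqrt_iff (by positivity)]
  have hden : 0 < 2*x^2 + 2*x := by nlinarith
  rw [le_div_iff₀ hden]
  constructor
  · intro h; nlinarith
  · intro h; nlinarith
end

section
/- For every integer k ≥ 1, the period ratio ρ_k(m) = ((k+1)√(1 - k²α))/(k√(1 - (k+1)²α)) with α = 1-3m+2m², viewed as a function of m on (1/2, 1), is C¹ (the expressions under the square roots are positive since α < 0 on (1/2,1)), strictly decreasing on [1/2, 3/4] ∩ (1/2,1) and strictly increasing on [3/4, 1). -/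
open Real Set

private lemma key_lt (k : ℕ) (hk : 1 ≤ k) {a b : ℝ}
    (ha : 1 - 3*a + 2*a^2 < 0) (hb : 1 - 3*b + 2*b^2 < 0)
    (hab : 1 - 3*a + 2*a^2 < 1 - 3*b + 2*b^2) :
    ((k : ℝ)+1) * Real.sqrt (1 - (k : ℝ)^2*(1 - 3*a + 2*a^2))
      / ((k : ℝ) * Real.sqrt (1 - ((k : ℝ)+1)^2*(1 - 3*a + 2*a^2)))
    < ((k : ℝ)+1) * Real.sqrt (1 - (k : ℝ)^2*(1 - 3*b + 2*b^2))
      / ((k : ℝ) * Real.sqrt (1 - ((k : ℝ)+1)^2*(1 - 3*b + 2*b^2))) := by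
  have hK : (1:ℝ) ≤ (k:ℝ) := by exact_mod_cast hk
  have hKpos : (0:ℝ) < (k:ℝ) := by linarith
  set αa := 1 - 3*a + 2*a^2 with hαa
  set αb := 1 - 3*b + 2*b^2 with hαb
  have hAa : 0 < 1 - (k:ℝ)^2*αa := by nlinarith [sq_nonneg (k:ℝ)]
  have hAb : 0 < 1 - (k:ℝ)^2*αb := by nlinarith [sq_nonneg (k:ℝ)]
  have hBa : 0 < 1 - ((k:ℝ)+1)^2*αa := by nlinarith [sq_nonneg ((k:ℝ)+1)]
  have hBb : 0 < 1 - ((k:ℝ)+1)^2*αb := by nlinarith [sq_nonneg ((k:ℝ)+1)]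
  have hsa : 0 < Real.sqrt (1 - ((k:ℝ)+1)^2*αa) := Real.sqrt_pos.mpr hBa
  have hsb : 0 < Real.sqrt (1 - ((k:ℝ)+1)^2*αb) := Real.sqrt_pos.mpr hBb
  rw [div_lt_div_iff₀ (by positivity) (by positivity)]
  have hmul : Real.sqrt (1 - (k:ℝ)^2*αa) * Real.sqrt (1 - ((k:ℝ)+1)^2*αb)
      < Real.sqrt (1 - (k:ℝ)^2*αb) * Real.sqrt (1 - ((k:ℝ)+1)^2*αa) := by
    rw [← Real.sqrt_mul hAa.le, ← Real.sqrt_mul hAb.le]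
    apply Real.sqrt_lt_sqrt (by positivity)
    have hd : (1 - (k:ℝ)^2*αb) * (1 - ((k:ℝ)+1)^2*αa)
        - (1 - (k:ℝ)^2*αa) * (1 - ((k:ℝ)+1)^2*αb) = (2*(k:ℝ)+1)*(αb-αa) := by ring
    nlinarith [mul_pos (show (0:ℝ) < 2*(k:ℝ)+1 by linarith) (show (0:ℝ) < αb - αa by linarith)]
  have hpos : (0:ℝ) < ((k:ℝ)+1) * (k:ℝ) := by positivity
  calc ((k:ℝ)+1) * Real.sqrt (1 - (k:ℝ)^2*αa) * ((k:ℝ) * Real.sqrt (1 - ((k:ℝ)+1)^2*αb))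
      = (((k:ℝ)+1) * (k:ℝ)) * (Real.sqrt (1 - (k:ℝ)^2*αa) * Real.sqrt (1 - ((k:ℝ)+1)^2*αb)) := by
        ring
    _ < (((k:ℝ)+1) * (k:ℝ)) * (Real.sqrt (1 - (k:ℝ)^2*αb) * Real.sqrt (1 - ((k:ℝ)+1)^2*αa)) :=
        mul_lt_mul_of_pos_left hmul hpos
    _ = ((k:ℝ)+1) * Real.sqrt (1 - (k:ℝ)^2*αb) * ((k:ℝ) * Real.sqrt (1 - ((k:ℝ)+1)^2*αa)) := by
        ring

theorem period_ratio_k_C1_monotone (k : ℕ) (hk : 1 ≤ k) :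
    ContDiffOn ℝ 1
      (fun m : ℝ => ((k : ℝ)+1) * Real.sqrt (1 - (k : ℝ)^2*(1 - 3*m + 2*m^2))
        / ((k : ℝ) * Real.sqrt (1 - ((k : ℝ)+1)^2*(1 - 3*m + 2*m^2))))
      (Set.Ioo (1/2 : ℝ) 1) ∧
    StrictAntiOn
      (fun m : ℝ => ((k : ℝ)+1) * Real.sqrt (1 - (k : ℝ)^2*(1 - 3*m + 2*m^2))
        / ((k : ℝ) * Real.sqrt (1 - ((k : ℝ)+1)^2*(1 - 3*m + 2*m^2))))
      (Set.Ioc (1/2 : ℝ) (3/4)) ∧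
    StrictMonoOn
      (fun m : ℝ => ((k : ℝ)+1) * Real.sqrt (1 - (k : ℝ)^2*(1 - 3*m + 2*m^2))
        / ((k : ℝ) * Real.sqrt (1 - ((k : ℝ)+1)^2*(1 - 3*m + 2*m^2))))
      (Set.Ico (3/4 : ℝ) 1) := by
  have hK : (1:ℝ) ≤ (k:ℝ) := by exact_mod_cast hk
  have hKpos : (0:ℝ) < (k:ℝ) := by linarith
  have hneg : ∀ m : ℝ, 1/2 < m → m < 1 → 1 - 3*m + 2*m^2 < 0 := by
    intro m h1 h2
    nlinarith [mul_pos (show (0:ℝ) < 1 - m by linarith) (show (0:ℝ) < 2*m - 1 by linarith)]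
  refine ⟨?_, ?_, ?_⟩
  · apply ContDiffOn.div
    · apply ContDiffOn.mul contDiffOn_const
      apply ContDiffOn.sqrt
      · exact (contDiff_const.sub (contDiff_const.mul
          ((contDiff_const.sub (contDiff_const.mul contDiff_id)).add
            (contDiff_const.mul (contDiff_id.pow 2))))).contDiffOn
      · intro x hx
        have := hneg x hx.1 hx.2
        have : 0 < 1 - (k:ℝ)^2*(1 - 3*x + 2*x^2) := by nlinarith [sq_nonneg (k:ℝ)]
        linarith
    · apply ContDiffOn.mul contDiffOn_const
      apply ContDiffOn.sqrt
      · exact (contDiff_const.sub (contDiff_const.mul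
          ((contDiff_const.sub (contDiff_const.mul contDiff_id)).add
            (contDiff_const.mul (contDiff_id.pow 2))))).contDiffOn
      · intro x hx
        have := hneg x hx.1 hx.2
        have : 0 < 1 - ((k:ℝ)+1)^2*(1 - 3*x + 2*x^2) := by nlinarith [sq_nonneg ((k:ℝ)+1)]
        linarith
    · intro x hx
      have := hneg x hx.1 hx.2
      have h : 0 < 1 - ((k:ℝ)+1)^2*(1 - 3*x + 2*x^2) := by nlinarith [sq_nonneg ((k:ℝ)+1)]
      have := Real.sqrt_pos.mpr h
      positivity
  · intro a ha b hb hab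
    have haneg : 1 - 3*a + 2*a^2 < 0 := hneg a ha.1 (by linarith [ha.2])
    have hbneg : 1 - 3*b + 2*b^2 < 0 := hneg b hb.1 (by linarith [hb.2])
    apply key_lt k hk hbneg haneg
    nlinarith [mul_pos (show (0:ℝ) < b - a by linarith)
      (show (0:ℝ) < 3 - 2*(a+b) by nlinarith [ha.1, ha.2, hb.2, hab])]
  · intro a ha b hb hab
    have haneg : 1 - 3*a + 2*a^2 < 0 := hneg a (by linarith [ha.1]) ha.2
    have hbneg : 1 - 3*b + 2*b^2 < 0 := hneg b (by linarith [hb.1]) hb.2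
    apply key_lt k hk haneg hbneg
    nlinarith [mul_pos (show (0:ℝ) < b - a by linarith)
      (show (0:ℝ) < 2*(a+b) - 3 by nlinarith [ha.1, hb.1, hab])]
end
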